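/- Let p_t(y) = (2πt)^{−1/2} e^{−y²/(2t)} for t > 0, y ∈ ℝ, define Q((s,x),(t,y)) = ∫₀^{min(s,t)} p_{s+t−2r}(x−y) dr, and define V(s,t,x,y) = Q((s,x),(s,x)) + Q((t,x),(t,x)) + Q((s,y),(s,y)) + Q((t,y),(t,y)) − 2Q((s,x),(t,x)) − 2Q((s,x),(s,y)) + 2Q((s,x),(t,y)) + 2Q((t,x),(s,y)) − 2Q((t,x),(t,y)) − 2Q((s,y),(t,y)). Define ρ : [0,∞) → [0,∞) by ρ(u) = √(2/π) ∫₀^u r^{−1/2}(1 − e^{−1/r}) dr. Then for all s, t > 0 and x, y ∈ ℝ with x ≠ y, V(s,t,x,y) ≤ |x − y| · ρ(|t − s| / |x − y|²). -/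

import Mathlib

open MeasureTheory Set

/-- One-dimensional heat kernel `p_t(y) = (2πt)^{−1/2} e^{−y²/(2t)}`. -/
noncomputable def heatK (t y : ℝ) : ℝ :=
  (Real.sqrt (2 * Real.pi * t))⁻¹ * Real.exp (-y ^ 2 / (2 * t))

/-- Covariance `Q((s,x),(t,y)) = ∫₀^{s∧t} p_{s+t−2r}(x−y) dr` of the mild solution of
the stochastic heat equation with additive space-time white noise. -/
noncomputable def heatQ (s x t y : ℝ) : ℝ :=
  ∫ r in Set.Ioc (0:ℝ) (min s t), heatK (s + t - 2 * r) (x - y)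

/-- Second moment `V(s,t,x,y) = E[(u(t,y) − u(t,x) − u(s,y) + u(s,x))²]` of the
rectangular increment, expressed through the covariance `Q`. -/
noncomputable def heatV (s t x y : ℝ) : ℝ :=
  heatQ s x s x + heatQ t x t x + heatQ s y s y + heatQ t y t y
    - 2 * heatQ s x t x - 2 * heatQ s x s y + 2 * heatQ s x t y
    + 2 * heatQ t x s y - 2 * heatQ t x t y - 2 * heatQ s y t y

/-- The function `ρ(u) = √(2/π) ∫₀^u r^{−1/2}(1 − e^{−1/r}) dr`. -/
noncomputable def rhoFn (u : ℝ) : ℝ :=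
  Real.sqrt (2 / Real.pi) *
    ∫ r in Set.Ioc (0:ℝ) u, r ^ (-(1:ℝ)/2) * (1 - Real.exp (-(1 / r)))

/-!
Substituting `u = s + t - 2r` writes each `Q` as half the integral of the heat kernel `p_u(x - y)`
over `u ∈ [|s - t|, s + t]`, so `V` is a combination of integrals of the gap
`g(u) = p_u(0) - p_u(x - y)`. For `s ≤ t` this combination equals `2 ∫₀^{t-s} g` plus
`∫_{s+t}^{2t} g - ∫_{2s}^{s+t} g`, which is nonpositive because `g` decreases on `(0, ∞)`.
Rescaling `u = (x - y)² r` turns `2 ∫₀^{t-s} g` into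
`|x - y| √(2/π) ∫₀^{(t-s)/(x-y)²} r^{-1/2} (1 - e^{-1/(2r)}) dr`, which is at most
`|x - y| ρ((t - s)/(x - y)²)` since `e^{-1/r} ≤ e^{-1/(2r)}`.
-/

open Real intervalIntegral

theorem rpow_neg_one_div_two_eq_inv_sqrt {u : ℝ} (hu : 0 ≤ u) : u ^ (-(1:ℝ) / 2) = (√u)⁻¹ := by
  rw [neg_div, rpow_neg hu, sqrt_eq_rpow]

theorem heatK_eq (u y : ℝ) :
    heatK u y = (√(2 * π))⁻¹ * (√u)⁻¹ * exp (-y ^ 2 / (2 * u)) := by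
  rw [heatK, sqrt_mul (by positivity) u, mul_inv]

theorem heatK_le_rpow {u : ℝ} (hu : 0 < u) (y : ℝ) :
    heatK u y ≤ (√(2 * π))⁻¹ * u ^ (-(1:ℝ) / 2) := by
  have hexp : exp (-y ^ 2 / (2 * u)) ≤ 1 := exp_le_one_iff.2 (by
    rw [neg_div]; exact neg_nonpos.2 (by positivity))
  rw [heatK_eq u y, rpow_neg_one_div_two_eq_inv_sqrt hu.le]
  exact mul_le_of_le_one_right (by positivity) hexp

theorem intervalIntegrable_heatK (y : ℝ) {a b : ℝ} (ha : 0 ≤ a) (hb : 0 ≤ b) :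
    IntervalIntegrable (fun u => heatK u y) volume a b := by
  refine ((intervalIntegrable_rpow' (r := -(1:ℝ) / 2) (by norm_num)).const_mul
    (√(2 * π))⁻¹).mono_fun' ?_ ?_
  · exact (by unfold heatK; fun_prop : Measurable fun u => heatK u y).aestronglyMeasurable
  · refine (ae_restrict_iff' measurableSet_uIoc).2 (Filter.Eventually.of_forall fun u hu => ?_)
    have hu0 : 0 < u := (le_min ha hb).trans_lt hu.1
    dsimp only
    rw [norm_of_nonneg (by unfold heatK; positivity)]
    exact heatK_le_rpow hu0 y

theorem heatQ_eq_integral {s t : ℝ} (hs : 0 ≤ s) (ht : 0 ≤ t) (x y : ℝ) :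
    heatQ s x t y = 2⁻¹ * ∫ u in |s - t|..s + t, heatK u (x - y) := by
  have hmin : s + t - 2 * min s t = |s - t| := by
    rcases le_total s t with h | h
    · rw [min_eq_left h, abs_of_nonpos (by linarith)]; ring
    · rw [min_eq_right h, abs_of_nonneg (by linarith)]; ring
  rw [heatQ, ← integral_of_le (le_min hs ht),
    integral_comp_sub_mul (fun u => heatK u (x - y)) two_ne_zero, hmin, mul_zero, sub_zero,
    smul_eq_mul]

theorem heatQ_comm (s x t y : ℝ) : heatQ s x t y = heatQ t y s x := by
  simp only [heatQ, heatK, min_comm s t, add_comm s t, ← neg_sub y x, even_two.neg_pow]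

theorem heatV_comm (s t x y : ℝ) : heatV s t x y = heatV t s x y := by
  simp only [heatV, heatQ_comm t x s x, heatQ_comm t y s y, heatQ_comm t x s y,
    heatQ_comm s x t y]
  ring

noncomputable def heatGap (a u : ℝ) : ℝ := heatK u 0 - heatK u a

theorem intervalIntegrable_heatGap (a : ℝ) {b c : ℝ} (hb : 0 ≤ b) (hc : 0 ≤ c) :
    IntervalIntegrable (heatGap a) volume b c :=
  (intervalIntegrable_heatK 0 hb hc).sub (intervalIntegrable_heatK a hb hc)

theorem integral_heatGap (c : ℝ) {a b : ℝ} (ha : 0 ≤ a) (hb : 0 ≤ b) :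
    ∫ u in a..b, heatGap c u = (∫ u in a..b, heatK u 0) - ∫ u in a..b, heatK u c :=
  integral_sub (intervalIntegrable_heatK 0 ha hb) (intervalIntegrable_heatK c ha hb)

theorem heatV_eq_integral_heatGap {s t : ℝ} (hs : 0 ≤ s) (ht : 0 ≤ t) (x y : ℝ) :
    heatV s t x y = (∫ u in 0..s + s, heatGap (x - y) u) + (∫ u in 0..t + t, heatGap (x - y) u)
      - 2 * ∫ u in |s - t|..s + t, heatGap (x - y) u := by
  rw [integral_heatGap _ le_rfl (by positivity), integral_heatGap _ le_rfl (by positivity),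
    integral_heatGap _ (abs_nonneg _) (by positivity)]
  simp only [heatV, heatQ_eq_integral hs hs, heatQ_eq_integral ht ht, heatQ_eq_integral hs ht,
    heatQ_eq_integral ht hs, sub_self, abs_zero, abs_sub_comm t s, add_comm t s]
  ring

theorem heatGap_eq (a u : ℝ) :
    heatGap a u = (√(2 * π))⁻¹ * ((√u)⁻¹ * (1 - exp (-a ^ 2 / (2 * u)))) := by
  rw [heatGap, heatK_eq, heatK_eq, zero_pow two_ne_zero, neg_zero, zero_div, exp_zero]
  ring

theorem heatGap_antitoneOn (a : ℝ) : AntitoneOn (heatGap a) (Ioi 0) := by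
  intro u (hu : 0 < u) v (hv : 0 < v) huv
  have hexp : exp (-a ^ 2 / (2 * u)) ≤ exp (-a ^ 2 / (2 * v)) := by
    simp only [neg_div, exp_le_exp, neg_le_neg_iff]
    gcongr
  have hexp_le_one : exp (-a ^ 2 / (2 * v)) ≤ 1 :=
    exp_le_one_iff.2 (by rw [neg_div]; exact neg_nonpos.2 (by positivity))
  rw [heatGap_eq, heatGap_eq]
  gcongr

theorem integral_comp_add_le_of_antitoneOn {f : ℝ → ℝ} (hf : AntitoneOn f (Ioi 0)) {a b c : ℝ}
    (ha : 0 < a) (hab : a ≤ b) (hc : 0 ≤ c) :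
    ∫ u in a + c..b + c, f u ≤ ∫ u in a..b, f u := by
  have hpos : ∀ u ∈ uIcc a b, 0 < u := fun u hu => by
    rw [uIcc_of_le hab] at hu; exact ha.trans_le hu.1
  have hfc : AntitoneOn (fun u => f (u + c)) (uIcc a b) := fun u hu v hv huv =>
    hf (show 0 < u + c by linarith [hpos u hu]) (show 0 < v + c by linarith [hpos v hv])
      (by linarith)
  rw [← integral_comp_add_right]
  refine integral_mono_on hab hfc.intervalIntegrable (hf.mono hpos).intervalIntegrable
    fun u hu => ?_
  have hu0 := hpos u (by rwa [uIcc_of_le hab])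
  exact hf hu0 (show 0 < u + c by linarith) (by linarith)

theorem integral_add_integral_sub_two_mul_integral_le_of_antitoneOn {f : ℝ → ℝ}
    (hf : AntitoneOn f (Ioi 0)) {s t : ℝ} (hs : 0 < s) (hst : s ≤ t)
    (hfi : IntervalIntegrable f volume 0 (t + t)) :
    (∫ u in 0..s + s, f u) + (∫ u in 0..t + t, f u) - 2 * ∫ u in t - s..s + t, f u
      ≤ 2 * ∫ u in 0..t - s, f u := by
  have hsub : ∀ a b, 0 ≤ a → a ≤ b → b ≤ t + t →
      ∫ u in a..b, f u = (∫ u in 0..b, f u) - ∫ u in 0..a, f u := by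
    have hF : ∀ b, 0 ≤ b → b ≤ t + t → IntervalIntegrable f volume 0 b := fun b h0 h1 =>
      hfi.mono_set (by rw [uIcc_of_le h0, uIcc_of_le (by linarith)]; exact Icc_subset_Icc_right h1)
    exact fun a b ha hab hb =>
      (integral_interval_sub_left (hF b (ha.trans hab) hb) (hF a ha (hab.trans hb))).symm
  have hshift := integral_comp_add_le_of_antitoneOn hf (by linarith : 0 < s + s)
    (by linarith : s + s ≤ s + t) (sub_nonneg.2 hst)
  rw [show s + s + (t - s) = s + t by ring, show s + t + (t - s) = t + t by ring,
    hsub (s + t) (t + t) (by linarith) (by linarith) le_rfl,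
    hsub (s + s) (s + t) (by linarith) (by linarith) (by linarith)] at hshift
  rw [hsub (t - s) (s + t) (by linarith) (by linarith) (by linarith)]
  linarith

theorem heatV_le_two_mul_integral_heatGap {s t : ℝ} (hs : 0 < s) (hst : s ≤ t) (x y : ℝ) :
    heatV s t x y ≤ 2 * ∫ u in 0..t - s, heatGap (x - y) u := by
  rw [heatV_eq_integral_heatGap hs.le (hs.le.trans hst), abs_sub_comm,
    abs_of_nonneg (sub_nonneg.2 hst)]
  exact integral_add_integral_sub_two_mul_integral_le_of_antitoneOn (heatGap_antitoneOn _) hs hst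
    (intervalIntegrable_heatGap _ le_rfl (by linarith))

theorem integral_heatGap_eq_mul_integral {a : ℝ} (ha : a ≠ 0) (τ : ℝ) :
    ∫ u in 0..τ, heatGap a u = a ^ 2 * ∫ r in 0..τ / a ^ 2, heatGap a (a ^ 2 * r) := by
  have ha2 : a ^ 2 ≠ 0 := pow_ne_zero 2 ha
  rw [integral_comp_mul_left _ ha2, mul_zero, mul_div_cancel₀ _ ha2, smul_eq_mul,
    mul_inv_cancel_left₀ ha2]

theorem two_mul_sq_mul_heatGap {a r : ℝ} (ha : a ≠ 0) (hr : 0 < r) :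
    2 * a ^ 2 * heatGap a (a ^ 2 * r)
      = |a| * √(2 / π) * (r ^ (-(1:ℝ) / 2) * (1 - exp (-(1 / (2 * r))))) := by
  have hexp : -a ^ 2 / (2 * (a ^ 2 * r)) = -(1 / (2 * r)) := by
    field_simp
  have hsqrt : √(a ^ 2 * r) = |a| * √r := by
    rw [sqrt_mul (sq_nonneg a), sqrt_sq_eq_abs]
  have hpi : √(2 / π) = 2 * (√(2 * π))⁻¹ := by
    rw [sqrt_div zero_le_two, sqrt_mul zero_le_two]
    field_simp
    exact sq_sqrt zero_le_two
  rw [heatGap_eq, hexp, hsqrt, rpow_neg_one_div_two_eq_inv_sqrt hr.le, ← sq_abs a, hpi]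
  have ha' : |a| ≠ 0 := abs_ne_zero.2 ha
  field_simp

theorem intervalIntegrable_rpow_neg_half_mul_one_sub_exp {U : ℝ} (hU : 0 ≤ U) :
    IntervalIntegrable (fun r : ℝ => r ^ (-(1:ℝ) / 2) * (1 - exp (-(1 / r)))) volume 0 U := by
  refine (intervalIntegrable_rpow' (r := -(1:ℝ) / 2) (by norm_num)).mono_fun' (by fun_prop) ?_
  refine (ae_restrict_iff' measurableSet_uIoc).2 (Filter.Eventually.of_forall fun r hr => ?_)
  have hr0 : 0 < r := (le_min le_rfl hU).trans_lt hr.1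
  have hexp_pos : 0 < exp (-(1 / r)) := exp_pos _
  have hexp_le_one : exp (-(1 / r)) ≤ 1 := exp_le_one_iff.2 (neg_nonpos.2 (by positivity))
  dsimp only
  rw [norm_of_nonneg (mul_nonneg (rpow_nonneg hr0.le _) (by linarith))]
  exact mul_le_of_le_one_right (rpow_nonneg hr0.le _) (by linarith)

theorem two_mul_integral_heatGap_le_rhoFn (a : ℝ) {τ : ℝ} (hτ : 0 ≤ τ) :
    2 * ∫ u in 0..τ, heatGap a u ≤ |a| * rhoFn (τ / a ^ 2) := by
  rcases eq_or_ne a 0 with rfl | ha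
  · simp [heatGap]
  have hU : 0 ≤ τ / a ^ 2 := by positivity
  have hint : IntervalIntegrable (fun r => 2 * a ^ 2 * heatGap a (a ^ 2 * r)) volume 0
      (τ / a ^ 2) := by
    simpa using ((intervalIntegrable_heatGap a le_rfl hτ).comp_mul_left (c := a ^ 2)).const_mul
      (2 * a ^ 2)
  rw [integral_heatGap_eq_mul_integral ha, rhoFn, ← integral_of_le hU]
  calc 2 * (a ^ 2 * ∫ r in 0..τ / a ^ 2, heatGap a (a ^ 2 * r))
      = ∫ r in 0..τ / a ^ 2, 2 * a ^ 2 * heatGap a (a ^ 2 * r) := by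
        rw [intervalIntegral.integral_const_mul]; ring
    _ ≤ ∫ r in 0..τ / a ^ 2, |a| * √(2 / π) * (r ^ (-(1:ℝ) / 2) * (1 - exp (-(1 / r)))) := by
        refine integral_mono_on_of_le_Ioo hU hint
          ((intervalIntegrable_rpow_neg_half_mul_one_sub_exp hU).const_mul _) fun r hr => ?_
        have hr0 : 0 < r := hr.1
        rw [two_mul_sq_mul_heatGap ha hr0]
        gcongr
        linarith
    _ = |a| * (√(2 / π) * ∫ r in 0..τ / a ^ 2, r ^ (-(1:ℝ) / 2) * (1 - exp (-(1 / r)))) := by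
        rw [intervalIntegral.integral_const_mul]; ring

theorem heatV_le_rho_general (s t x y : ℝ) (hs : 0 < s) (ht : 0 < t) :
    heatV s t x y ≤ |x - y| * rhoFn (|t - s| / |x - y| ^ 2) := by
  wlog hst : s ≤ t generalizing s t
  · rw [heatV_comm, abs_sub_comm t s]
    exact this t s ht hs (le_of_not_ge hst)
  calc heatV s t x y ≤ 2 * ∫ u in 0..t - s, heatGap (x - y) u :=
        heatV_le_two_mul_integral_heatGap hs hst x y
    _ ≤ |x - y| * rhoFn ((t - s) / (x - y) ^ 2) :=
        two_mul_integral_heatGap_le_rhoFn _ (sub_nonneg.2 hst)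
    _ = |x - y| * rhoFn (|t - s| / |x - y| ^ 2) := by
        rw [abs_of_nonneg (sub_nonneg.2 hst), sq_abs]

/-- **Unified bound on the increment variance (Remark 5.5).** For all `s, t > 0` and
`x ≠ y`, `V(s,t,x,y) ≤ |x − y| ρ(|t − s|/|x − y|²)`. -/
theorem heatV_le_rho (s t x y : ℝ) (hs : 0 < s) (ht : 0 < t) (hxy : x ≠ y) :
    heatV s t x y ≤ |x - y| * rhoFn (|t - s| / |x - y| ^ 2) :=
  heatV_le_rho_general s t x y hs ht
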